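/- Let d, T be natural numbers with d ≥ 1, let λ > 0 and B ≥ 0 be reals, let x_0, …, x_{T−1} ∈ ℝ^d satisfy ‖x_t‖₂ ≤ B for all t < T, and let c_0, …, c_{T−1} ≥ 0 be reals. Define the matrices Σ_0 = λ·I and Σ_{t+1} = Σ_t + x_t x_tᵀ + c_t·I for t < T, and set w_t² = x_tᵀ Σ_t⁻¹ x_t. Then Σ_{t=0}^{T−1} min(w_t², 1) ≤ 2·d·log(1 + (T·B² + d·Σ_{t=0}^{T−1} c_t)/(d·λ)). -/

import Mathlib

/-!
Each factor `1 + w_t²` is the ratio `det (Σ_t + x_t x_tᵀ) / det Σ_t` (matrix determinant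
lemma), and adding the positive semidefinite `c_t • 1` can only increase the determinant, so
`∑ log (1 + w_t²) ≤ log det Σ_T - log det Σ_0`. Concavity of `log` applied to the eigenvalues
of `Σ_T` bounds `log det Σ_T` by `d log (tr Σ_T / d)`, and the trace grows by at most
`B² + d c_t` per step. Finally `min u 1 ≤ 2 log (1 + u)` for `u ≥ 0`.
-/

open Matrix Finset

namespace Matrix

variable {n : Type*} [Fintype n]

theorem posSemidef_vecMulVec_self (v : n → ℝ) : (vecMulVec v v).PosSemidef := by
  simpa using posSemidef_vecMulVec_self_star v

variable [DecidableEq n]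

theorem det_add_vecMulVec {α : Type*} [CommRing α] {A : Matrix n n α} (hA : IsUnit A.det)
    (u v : n → α) : (A + vecMulVec u v).det = A.det * (1 + v ⬝ᵥ A⁻¹ *ᵥ u) := by
  rw [vecMulVec_eq Unit, det_add_replicateCol_mul_replicateRow hA, ← replicateRow_vecMul,
    det_unique (1 + _), add_apply, one_apply_eq, replicateRow_mul_replicateCol_apply,
    dotProduct_mulVec]

theorem PosDef.dotProduct_inv_mulVec_nonneg {A : Matrix n n ℝ} (hA : A.PosDef) (v : n → ℝ) :
    0 ≤ v ⬝ᵥ A⁻¹ *ᵥ v := by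
  simpa using hA.inv.posSemidef.dotProduct_mulVec_nonneg v

theorem PosDef.det_mul_one_add_dotProduct_inv_mulVec {A : Matrix n n ℝ} (hA : A.PosDef)
    (v : n → ℝ) : A.det * (1 + v ⬝ᵥ A⁻¹ *ᵥ v) = (A + vecMulVec v v).det :=
  (det_add_vecMulVec (isUnit_iff_ne_zero.mpr hA.det_pos.ne') v v).symm

theorem PosDef.det_le_det_add_vecMulVec_self {A : Matrix n n ℝ} (hA : A.PosDef) (v : n → ℝ) :
    A.det ≤ (A + vecMulVec v v).det := by
  rw [← hA.det_mul_one_add_dotProduct_inv_mulVec]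
  have := hA.dotProduct_inv_mulVec_nonneg v
  nlinarith [hA.det_pos]

theorem PosDef.det_le_det_add {A B : Matrix n n ℝ} (hA : A.PosDef) (hB : B.PosSemidef) :
    A.det ≤ (A + B).det := by
  obtain ⟨m, v, rfl⟩ := posSemidef_iff_eq_sum_vecMulVec.mp hB
  simp only [star_trivial]
  induction (univ : Finset (Fin m)) using Finset.induction_on with
  | empty => simp
  | insert i s hi ih =>
    have hPD : (A + ∑ j ∈ s, vecMulVec (v j) (v j)).PosDef :=
      hA.add_posSemidef (posSemidef_sum s fun j _ => posSemidef_vecMulVec_self (v j))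
    rw [sum_insert hi, add_comm (vecMulVec _ _), ← add_assoc]
    exact ih.trans (hPD.det_le_det_add_vecMulVec_self _)

theorem PosDef.log_det_le {A : Matrix n n ℝ} [Nonempty n] (hA : A.PosDef) :
    Real.log A.det ≤ Fintype.card n * Real.log (A.trace / Fintype.card n) := by
  have hcard : (0 : ℝ) < Fintype.card n := by exact_mod_cast Fintype.card_pos
  have hH := hA.isHermitian
  have jensen := strictConcaveOn_log_Ioi.concaveOn.le_map_sum (t := univ)
    (w := fun _ => (Fintype.card n : ℝ)⁻¹) (p := hH.eigenvalues)
    (fun _ _ => by positivity) (by simp [hcard.ne']) (fun i _ => hA.eigenvalues_pos i)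
  rw [hH.det_eq_prod_eigenvalues, hH.trace_eq_sum_eigenvalues]
  simp only [RCLike.ofReal_real_eq_id, id, smul_eq_mul, ← mul_sum] at jensen ⊢
  rw [Real.log_prod fun i _ => (hA.eigenvalues_pos i).ne', div_eq_inv_mul]
  rwa [← div_le_iff₀' hcard, div_eq_inv_mul]

theorem PosDef.log_det_sub_le_of_trace_le {A : Matrix n n ℝ} [Nonempty n] (hA : A.PosDef)
    {lam a : ℝ} (hlam : 0 < lam) (htr : A.trace ≤ Fintype.card n * lam + a) :
    Real.log A.det - Fintype.card n * Real.log lam ≤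
      Fintype.card n * Real.log (1 + a / (Fintype.card n * lam)) := by
  have hcard : (0 : ℝ) < Fintype.card n := by exact_mod_cast Fintype.card_pos
  have htr_pos : 0 < A.trace / (Fintype.card n * lam) := div_pos hA.trace_pos (by positivity)
  calc _ ≤ Fintype.card n * Real.log (A.trace / Fintype.card n) -
          Fintype.card n * Real.log lam := by gcongr; exact hA.log_det_le
    _ = Fintype.card n * Real.log (A.trace / (Fintype.card n * lam)) := by
        rw [← div_div, Real.log_div (div_pos hA.trace_pos hcard).ne' hlam.ne']; ring
    _ ≤ _ := by
        gcongr
        rw [div_le_iff₀ (by positivity), add_mul, div_mul_cancel₀ _ (by positivity)]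
        linarith

end Matrix

theorem min_le_two_mul_log_one_add {u : ℝ} (hu : 0 ≤ u) : min u 1 ≤ 2 * Real.log (1 + u) := by
  have hpos : 0 < 1 + u := by linarith
  calc min u 1 ≤ 2 * (u / (1 + u)) := by
        rw [mul_div_assoc', le_div_iff₀ hpos]
        rcases le_total u 1 with h | h
        · rw [min_eq_left h]; nlinarith
        · rw [min_eq_right h]; linarith
    _ = 2 * (1 - (1 + u)⁻¹) := by field_simp; ring
    _ ≤ 2 * Real.log (1 + u) := by gcongr; exact Real.one_sub_inv_le_log_of_pos hpos

section Design

variable {d T : ℕ} {lam : ℝ} {x : ℕ → Fin d → ℝ} {c : ℕ → ℝ}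
  {S : ℕ → Matrix (Fin d) (Fin d) ℝ}

theorem design_posDef (hlam : 0 < lam) (hc : ∀ t < T, 0 ≤ c t) (hS0 : S 0 = lam • 1)
    (hSs : ∀ t < T, S (t + 1) = S t + vecMulVec (x t) (x t) + c t • 1) :
    ∀ t ≤ T, (S t).PosDef := by
  intro t ht
  induction t with
  | zero => rw [hS0]; exact PosDef.one.smul hlam
  | succ t ih =>
    rw [hSs t ht]
    exact ((ih (by omega)).add_posSemidef (posSemidef_vecMulVec_self (x t))).add_posSemidef
      (PosSemidef.one.smul (hc t ht))

theorem log_one_add_width_le {t : ℕ} (hS : (S t).PosDef) (hct : 0 ≤ c t)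
    (hSt : S (t + 1) = S t + vecMulVec (x t) (x t) + c t • 1) :
    Real.log (1 + x t ⬝ᵥ (S t)⁻¹ *ᵥ x t) ≤
      Real.log (S (t + 1)).det - Real.log (S t).det := by
  have hdet : (S t).det * (1 + x t ⬝ᵥ (S t)⁻¹ *ᵥ x t) ≤ (S (t + 1)).det := by
    rw [hS.det_mul_one_add_dotProduct_inv_mulVec, hSt]
    exact (hS.add_posSemidef (posSemidef_vecMulVec_self (x t))).det_le_det_add
      (PosSemidef.one.smul hct)
  have hw : 0 < 1 + x t ⬝ᵥ (S t)⁻¹ *ᵥ x t := by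
    linarith [hS.dotProduct_inv_mulVec_nonneg (x t)]
  rw [le_sub_iff_add_le', ← Real.log_mul hS.det_pos.ne' hw.ne']
  exact Real.log_le_log (mul_pos hS.det_pos hw) hdet

theorem design_trace (hS0 : S 0 = lam • 1)
    (hSs : ∀ t < T, S (t + 1) = S t + vecMulVec (x t) (x t) + c t • 1) :
    (S T).trace = d * lam + ∑ t ∈ range T, (∑ i, x t i ^ 2 + d * c t) := by
  have h0 : (S 0).trace = d * lam := by simp [hS0, mul_comm]
  rw [← h0, ← sub_eq_iff_eq_add', ← sum_range_sub (fun t => (S t).trace)]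
  refine sum_congr rfl fun t ht => ?_
  rw [hSs t (mem_range.mp ht), trace_add, trace_add, add_assoc, add_sub_cancel_left]
  simp [trace, vecMulVec_apply, sq, mul_comm]

theorem sum_log_one_add_width_le (hlam : 0 < lam) (hc : ∀ t < T, 0 ≤ c t)
    (hS0 : S 0 = lam • 1)
    (hSs : ∀ t < T, S (t + 1) = S t + vecMulVec (x t) (x t) + c t • 1) :
    ∑ t ∈ range T, Real.log (1 + x t ⬝ᵥ (S t)⁻¹ *ᵥ x t) ≤
      Real.log (S T).det - Real.log (S 0).det := by
  rw [← sum_range_sub (fun t => Real.log (S t).det)]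
  refine sum_le_sum fun t ht => ?_
  have ht := mem_range.mp ht
  exact log_one_add_width_le (design_posDef hlam hc hS0 hSs t ht.le) (hc t ht) (hSs t ht)

theorem design_trace_le {B : ℝ} (hx : ∀ t < T, Real.sqrt (∑ i, x t i ^ 2) ≤ B)
    (hS0 : S 0 = lam • 1) (hSs : ∀ t < T, S (t + 1) = S t + vecMulVec (x t) (x t) + c t • 1) :
    (S T).trace ≤ d * lam + (T * B ^ 2 + d * ∑ t ∈ range T, c t) := by
  rw [design_trace hS0 hSs, sum_add_distrib, ← mul_sum]
  gcongr
  calc _ ≤ ∑ t ∈ range T, B ^ 2 :=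
        sum_le_sum fun t ht => (Real.sqrt_le_iff.mp (hx t (mem_range.mp ht))).2
    _ = T * B ^ 2 := by simp

end Design

theorem elliptical_potential_bound_general
    (d T : ℕ) (hd : 1 ≤ d) (lam B : ℝ) (hlam : 0 < lam)
    (x : ℕ → Fin d → ℝ) (hx : ∀ t < T, Real.sqrt (∑ i, x t i ^ 2) ≤ B)
    (c : ℕ → ℝ) (hc : ∀ t < T, 0 ≤ c t)
    (S : ℕ → Matrix (Fin d) (Fin d) ℝ)
    (hS0 : S 0 = lam • (1 : Matrix (Fin d) (Fin d) ℝ))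
    (hSs : ∀ t < T, S (t + 1) =
      S t + vecMulVec (x t) (x t) + c t • (1 : Matrix (Fin d) (Fin d) ℝ)) :
    ∑ t ∈ Finset.range T, min (x t ⬝ᵥ (S t)⁻¹ *ᵥ x t) 1 ≤
      2 * d *
        Real.log (1 + ((T : ℝ) * B ^ 2 + d * ∑ t ∈ Finset.range T, c t) / (d * lam)) := by
  have : Nonempty (Fin d) := ⟨⟨0, hd⟩⟩
  have hPD := design_posDef hlam hc hS0 hSs
  have hlogdet : Real.log (S T).det - Real.log (S 0).det ≤
      d * Real.log (1 + ((T : ℝ) * B ^ 2 + d * ∑ t ∈ range T, c t) / (d * lam)) := by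
    have h0 : Real.log (S 0).det = d * Real.log lam := by simp [hS0, Real.log_pow]
    simpa [h0] using (hPD T le_rfl).log_det_sub_le_of_trace_le hlam
      (by simpa using design_trace_le hx hS0 hSs)
  calc ∑ t ∈ range T, min (x t ⬝ᵥ (S t)⁻¹ *ᵥ x t) 1
      ≤ ∑ t ∈ range T, 2 * Real.log (1 + x t ⬝ᵥ (S t)⁻¹ *ᵥ x t) :=
        sum_le_sum fun t ht => min_le_two_mul_log_one_add
          ((hPD t (mem_range.mp ht).le).dotProduct_inv_mulVec_nonneg _)
    _ = 2 * ∑ t ∈ range T, Real.log (1 + x t ⬝ᵥ (S t)⁻¹ *ᵥ x t) := (mul_sum _ _ _).symm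
    _ ≤ 2 * (Real.log (S T).det - Real.log (S 0).det) := by
        gcongr; exact sum_log_one_add_width_le hlam hc hS0 hSs
    _ ≤ _ := by rw [mul_assoc]; gcongr

theorem elliptical_potential_bound
    (d T : ℕ) (hd : 1 ≤ d) (lam B : ℝ) (hlam : 0 < lam) (hB : 0 ≤ B)
    (x : ℕ → Fin d → ℝ) (hx : ∀ t < T, Real.sqrt (∑ i, x t i ^ 2) ≤ B)
    (c : ℕ → ℝ) (hc : ∀ t < T, 0 ≤ c t)
    (S : ℕ → Matrix (Fin d) (Fin d) ℝ)
    (hS0 : S 0 = lam • (1 : Matrix (Fin d) (Fin d) ℝ))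
    (hSs : ∀ t < T, S (t + 1) =
      S t + vecMulVec (x t) (x t) + c t • (1 : Matrix (Fin d) (Fin d) ℝ)) :
    ∑ t ∈ Finset.range T, min (x t ⬝ᵥ (S t)⁻¹ *ᵥ x t) 1 ≤
      2 * d *
        Real.log (1 + ((T : ℝ) * B ^ 2 + d * ∑ t ∈ Finset.range T, c t) / (d * lam)) :=
  elliptical_potential_bound_general d T hd lam B hlam x hx c hc S hS0 hSs
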